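/- arXiv:math/0209320 — 3 statements merged into one kernel-verified Lean document; each statement's English description precedes it below -/
import Mathlib

section
/- Let X and Y be Banach spaces and A : X → Y a continuous mapping that is Fréchet differentiable in a neighbourhood of x₀ ∈ X. Assume DA(x₀) has a bounded right inverse B(x₀) with norm ω₁ > 0, that DA satisfies the Lipschitz condition ‖DA(x₁) − DA(x₂)‖ ≤ ω₂‖x₁ − x₂‖ for x₁, x₂ in a neighbourhood of x₀, and that ω₃ > 0 satisfies 4ω₁(ω₁+1)(ω₂+1)ω₃ < 1. Then for every y ∈ Y with ‖A(x₀) − y‖ < ω₃ there exists x ∈ X with A(x) = y. -/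
/-!
On the closed ball of radius `r` about `x₀`, the remainder `A - DA x₀` has derivative
`DA x - DA x₀` of norm at most `ω₂ r`, so by the mean value inequality `A` approximates the
linear map `DA x₀` with constant `ω₂ r`. The simplified Newton iteration `x ↦ x - B (A x - y)`
then converges, which makes `A` map that ball onto the closed ball of radius
`(ω₁⁻¹ - ω₂ r) r` about `A x₀`; for `r = 2 ω₁ ω₃` this radius is at least `ω₃`.
-/

open Metric Set

section

variable {𝕜 : Type*} [RCLike 𝕜] {E F : Type*} [NormedAddCommGroup E] [NormedSpace 𝕜 E]
  [NormedAddCommGroup F] [NormedSpace 𝕜 F]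

noncomputable def ContinuousLinearMap.NonlinearRightInverse.ofCompEqId {f : E →L[𝕜] F}
    {g : F →L[𝕜] E} (h : f.comp g = ContinuousLinearMap.id 𝕜 F) : f.NonlinearRightInverse where
  toFun := g
  nnnorm := ‖g‖₊
  bound' := g.le_opNorm
  right_inv' y := congr($h y)

theorem approximatesLinearOn_of_hasFDerivAt_of_norm_sub_le [NormedSpace ℝ E] {f : E → F}
    {f' : E → E →L[𝕜] F} {s : Set E} {x₀ : E} {c : NNReal} (hs : Convex ℝ s)
    (hf : ∀ x ∈ s, HasFDerivAt f (f' x) x) (hc : ∀ x ∈ s, ‖f' x - f' x₀‖ ≤ c) :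
    ApproximatesLinearOn f (f' x₀) s c :=
  LipschitzOnWith.approximatesLinearOn <|
    hs.lipschitzOnWith_of_nnnorm_hasFDerivWithin_le
      (fun x hx => ((hf x hx).sub (f' x₀).hasFDerivAt).hasFDerivWithinAt) hc

theorem surjOn_closedBall_of_fderiv_lipschitz [NormedSpace ℝ E] [CompleteSpace E] {f : E → F}
    {f' : E → E →L[𝕜] F} {x₀ : E} {g : F →L[𝕜] E}
    (hg : (f' x₀).comp g = ContinuousLinearMap.id 𝕜 F) {K r : ℝ} (hK : 0 ≤ K) (hr : 0 ≤ r)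
    (hf : ∀ x ∈ closedBall x₀ r, HasFDerivAt f (f' x) x)
    (hLip : ∀ x ∈ closedBall x₀ r, ‖f' x - f' x₀‖ ≤ K * ‖x - x₀‖) :
    SurjOn f (closedBall x₀ r) (closedBall (f x₀) ((‖g‖⁻¹ - K * r) * r)) := by
  have happrox : ApproximatesLinearOn f (f' x₀) (closedBall x₀ r) ⟨K * r, by positivity⟩ :=
    approximatesLinearOn_of_hasFDerivAt_of_norm_sub_le (convex_closedBall x₀ r) hf fun x hx =>
      (hLip x hx).trans (mul_le_mul_of_nonneg_left (mem_closedBall_iff_norm.mp hx) hK)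
  exact happrox.surjOn_closedBall_of_nonlinearRightInverse (.ofCompEqId hg) hr subset_rfl

end

theorem stmt0_general {X Y : Type*} [NormedAddCommGroup X] [NormedSpace ℝ X] [CompleteSpace X]
    [NormedAddCommGroup Y] [NormedSpace ℝ Y] [CompleteSpace Y]
    (A : X → Y) (x₀ : X) (DA : X → X →L[ℝ] Y)
    (hdiff : ∀ x ∈ Metric.ball x₀ 1, HasFDerivAt A (DA x) x)
    (B : Y →L[ℝ] X) (hright : (DA x₀).comp B = ContinuousLinearMap.id ℝ Y)
    (ω₁ ω₂ ω₃ : ℝ) (hω₁ : 0 < ω₁) (hBnorm : ‖B‖ = ω₁) (hω₂ : 0 < ω₂)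
    (hLip : ∀ x₁ ∈ Metric.ball x₀ 1, ∀ x₂ ∈ Metric.ball x₀ 1,
      ‖DA x₁ - DA x₂‖ ≤ ω₂ * ‖x₁ - x₂‖)
    (hω₃ : 0 < ω₃) (hsmall : 4 * ω₁ * (ω₁ + 1) * (ω₂ + 1) * ω₃ < 1) :
    ∀ y : Y, ‖A x₀ - y‖ < ω₃ → ∃ x : X, A x = y := by
  intro y hy
  set r := 2 * ω₁ * ω₃
  have hsmall' : 4 * ω₁ * ω₃ + 4 * ω₁ ^ 2 * ω₂ * ω₃ < 1 := by
    nlinarith [mul_pos (mul_pos hω₁ hω₃) (add_pos hω₁ hω₂)]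
  have hr : r < 1 := by linarith [show 0 < ω₁ ^ 2 * ω₂ * ω₃ by positivity]
  have hsub : closedBall x₀ r ⊆ ball x₀ 1 := closedBall_subset_ball hr
  have hreach : ω₃ ≤ (‖B‖⁻¹ - ω₂ * r) * r := by
    have hexpand : (ω₁⁻¹ - ω₂ * r) * r = ω₃ + ω₃ * (1 - 4 * ω₁ ^ 2 * ω₂ * ω₃) := by
      field_simp
      ring
    rw [hBnorm, hexpand]
    exact le_add_of_nonneg_right (mul_nonneg hω₃.le (by linarith [mul_pos hω₁ hω₃]))
  obtain ⟨x, -, hx⟩ := surjOn_closedBall_of_fderiv_lipschitz hright hω₂.le (by positivity)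
    (fun x hx => hdiff x (hsub hx)) (fun x hx => hLip x (hsub hx) x₀ (mem_ball_self one_pos))
    (mem_closedBall'.mpr ((dist_eq_norm _ _).trans_le (hy.le.trans hreach)))
  exact ⟨x, hx⟩

/-- **Begehr–Efendiev Newton-type solvability theorem.**
If `A : X → Y` is continuous, Fréchet differentiable near `x₀` with derivative `DA`,
`DA x₀` has a bounded right inverse `B` of norm `ω₁ > 0`, `DA` is Lipschitz with
constant `ω₂` near `x₀`, and `4ω₁(ω₁+1)(ω₂+1)ω₃ < 1`, then every `y` with
`‖A x₀ - y‖ < ω₃` is attained by `A`. -/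
theorem stmt0 {X Y : Type*} [NormedAddCommGroup X] [NormedSpace ℝ X] [CompleteSpace X]
    [NormedAddCommGroup Y] [NormedSpace ℝ Y] [CompleteSpace Y]
    (A : X → Y) (hAcont : Continuous A) (x₀ : X) (DA : X → X →L[ℝ] Y)
    (hdiff : ∀ x ∈ Metric.ball x₀ 1, HasFDerivAt A (DA x) x)
    (B : Y →L[ℝ] X) (hright : (DA x₀).comp B = ContinuousLinearMap.id ℝ Y)
    (ω₁ ω₂ ω₃ : ℝ) (hω₁ : 0 < ω₁) (hBnorm : ‖B‖ = ω₁) (hω₂ : 0 < ω₂)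
    (hLip : ∀ x₁ ∈ Metric.ball x₀ 1, ∀ x₂ ∈ Metric.ball x₀ 1,
      ‖DA x₁ - DA x₂‖ ≤ ω₂ * ‖x₁ - x₂‖)
    (hω₃ : 0 < ω₃) (hsmall : 4 * ω₁ * (ω₁ + 1) * (ω₂ + 1) * ω₃ < 1) :
    ∀ y : Y, ‖A x₀ - y‖ < ω₃ → ∃ x : X, A x = y :=
  stmt0_general A x₀ DA hdiff B hright ω₁ ω₂ ω₃ hω₁ hBnorm hω₂ hLip hω₃ hsmall
end

section
/- Let D be a bounded domain in ℂ with smooth boundary and let h₁, …, h_m be harmonic functions on D, continuous up to the boundary and C¹ up to the boundary, such that h_p = δ_{pj} on the boundary component Γ_j (j = 0,1,…,m, with Γ₀ the outer boundary, so each h_p vanishes on Γ₀). If λ₁, …, λ_m are real numbers such that the harmonic function h = Σ_{p=1}^m λ_p h_p has vanishing outward normal derivative ∂h/∂n everywhere on ∂D, then λ₁ = λ₂ = … = λ_m = 0. -/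
/-- `h` is harmonic on `s`: twice continuously differentiable with vanishing Laplacian. -/
def IsHarmonicOn (h : ℂ → ℝ) (s : Set ℂ) : Prop :=
  ContDiffOn ℝ 2 h s ∧
    ∀ z ∈ s, fderiv ℝ (fun w => fderiv ℝ h w 1) z 1 +
      fderiv ℝ (fun w => fderiv ℝ h w Complex.I) z Complex.I = 0

open Metric Set Complex InnerProductSpace Laplacian Bornology

/-!
Put `H = ∑ λ_p h_p`. On every boundary circle `H` is constant and `∂H/∂n = 0`, so the whole
gradient of `H` vanishes there. The conjugate gradient `∂H/∂x - i ∂H/∂y` of the harmonic function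
`H` is holomorphic in `D`, hence by the maximum modulus principle it vanishes on `closure D`:
`∇H = 0` on the closed domain. Along the ray from the point of `Γ_j` farthest from the origin,
`H` is therefore constant until the ray meets `Γ₀`, where `H = 0`, or another circle `Γ_t`
reaching farther out, where `H = λ_t`. A circle of maximal reach among those with `λ_j ≠ 0`
contradicts this.
-/

theorem laplacian_eq_fderiv_partial {h : ℂ → ℝ} {z : ℂ} (hh : ContDiffAt ℝ 2 h z) :
    Δ h z = fderiv ℝ (fun w => fderiv ℝ h w 1) z 1 + fderiv ℝ (fun w => fderiv ℝ h w I) z I := by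
  have hd : DifferentiableAt ℝ (fderiv ℝ h) z :=
    (hh.fderiv_right (m := 1) (by norm_num)).differentiableAt one_ne_zero
  simp [laplacian_eq_iteratedFDeriv_complexPlane, iteratedFDeriv_two_apply,
    fderiv_clm_apply hd (differentiableAt_const _)]

theorem IsHarmonicOn.harmonicOnNhd {h : ℂ → ℝ} {s : Set ℂ} (hh : IsHarmonicOn h s)
    (hs : IsOpen s) : HarmonicOnNhd h s := fun z hz => by
  refine ⟨hh.1.contDiffAt (hs.mem_nhds hz), ?_⟩
  filter_upwards [hs.mem_nhds hz] with w hw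
  rw [laplacian_eq_fderiv_partial (hh.1.contDiffAt (hs.mem_nhds hw))]
  exact hh.2 w hw

theorem InnerProductSpace.HarmonicOnNhd.fun_sum {ι : Type*} {f : ι → ℂ → ℝ} {s : Set ℂ}
    (t : Finset ι) (hf : ∀ i ∈ t, HarmonicOnNhd (f i) s) :
    HarmonicOnNhd (fun z => ∑ i ∈ t, f i z) s := by
  classical
  induction t using Finset.induction_on with
  | empty => simp
  | insert i t hi ih =>
    simp only [Finset.sum_insert hi]
    exact (hf i (t.mem_insert_self i)).add (ih fun j hj => hf j (Finset.mem_insert_of_mem hj))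

theorem ContinuousLinearMap.eq_zero_of_apply_eq_zero_of_apply_I_mul_eq_zero
    {F : Type*} [NormedAddCommGroup F] [NormedSpace ℝ F] {L : ℂ →L[ℝ] F} {v : ℂ} (hv : v ≠ 0)
    (h₁ : L v = 0) (h₂ : L (I * v) = 0) : L = 0 := by
  ext w
  have hw : w = (w / v).re • v + (w / v).im • (I * v) := by
    rw [real_smul, real_smul, ← mul_assoc, ← add_mul, re_add_im,
      div_mul_cancel₀ w hv]
  rw [hw, map_add, map_smul, map_smul, h₁, h₂]
  simp

theorem fderiv_eq_zero_of_complexPartial_eq_zero {H : ℂ → ℝ} {z : ℂ}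
    (h : (fderiv ℝ H z 1 : ℂ) - I * fderiv ℝ H z I = 0) : fderiv ℝ H z = 0 := by
  refine ContinuousLinearMap.eq_zero_of_apply_eq_zero_of_apply_I_mul_eq_zero one_ne_zero ?_ ?_
  · simpa using congrArg re h
  · simpa using congrArg im h

theorem InnerProductSpace.HarmonicOnNhd.fderiv_eq_zero_on_closure {H : ℂ → ℝ} {U : Set ℂ}
    (hU : IsBounded U) (hH : HarmonicOnNhd H U) (hcont : ContinuousOn (fderiv ℝ H) (closure U))
    (hfr : ∀ z ∈ frontier U, fderiv ℝ H z = 0) : ∀ z ∈ closure U, fderiv ℝ H z = 0 := by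
  set g : ℂ → ℂ := fun z => (fderiv ℝ H z 1 : ℂ) - I * fderiv ℝ H z I
  have hg : DiffContOnCl ℂ g U :=
    ⟨fun z hz => (HarmonicAt.differentiableAt_complex_partial (hH z hz)).differentiableWithinAt,
      by fun_prop⟩
  have hg0 : EqOn g 0 (closure U) :=
    eqOn_closure_of_eqOn_frontier hU hg diffContOnCl_const fun z hz => by simp [g, hfr z hz]
  exact fun z hz => fderiv_eq_zero_of_complexPartial_eq_zero (hg0 hz)

theorem fderiv_eq_zero_of_eqOn_sphere {H : ℂ → ℝ} {c z : ℂ} {R κ : ℝ} (hR : R ≠ 0)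
    (hH : DifferentiableAt ℝ H z) (hconst : ∀ w ∈ sphere c R, H w = κ) (hz : z ∈ sphere c R)
    (hnormal : fderiv ℝ H z (z - c) = 0) : fderiv ℝ H z = 0 := by
  have hzc : z - c ≠ 0 := by
    rw [mem_sphere_iff_norm] at hz
    exact fun h => hR (by rw [← hz, h, norm_zero])
  set γ : ℝ → ℂ := fun t => c + exp (t * I) * (z - c)
  have hγ : HasDerivAt γ (I * (z - c)) 0 := by
    simpa [γ] using ((((hasDerivAt_id (0 : ℝ)).ofReal_comp.mul_const I).cexp).mul_const
      (z - c)).const_add c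
  have hγ_sphere : ∀ t, γ t ∈ sphere c R := fun t => by
    simpa [γ, mem_sphere_iff_norm, norm_exp_ofReal_mul_I] using hz
  have hHγ : HasDerivAt (H ∘ γ) (fderiv ℝ H z (I * (z - c))) 0 := by
    have hγ0 : γ 0 = z := by simp [γ]
    have hHz := hH.hasFDerivAt
    rw [← hγ0] at hHz
    simpa only [hγ0] using hHz.comp_hasDerivAt 0 hγ
  have htangent : fderiv ℝ H z (I * (z - c)) = 0 := by
    have hconstγ : H ∘ γ = fun _ => κ := funext fun t => hconst _ (hγ_sphere t)
    rw [hconstγ] at hHγ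
    exact hHγ.unique (hasDerivAt_const 0 κ)
  exact ContinuousLinearMap.eq_zero_of_apply_eq_zero_of_apply_I_mul_eq_zero hzc hnormal htangent

theorem eq_of_fderiv_eq_zero_on_ray {H : ℂ → ℝ} (hH : Differentiable ℝ H) {u : ℂ} {A B : ℝ}
    (hAB : A ≤ B) (hzero : ∀ s ∈ Ico A B, fderiv ℝ H (s • u) = 0) : H (B • u) = H (A • u) := by
  have hderiv : ∀ s ∈ Ico A B, HasDerivWithinAt (fun s : ℝ => H (s • u)) 0 (Ici s) s := by
    intro s hs
    have := (hH (s • u)).hasFDerivAt.comp_hasDerivAt s ((hasDerivAt_id s).smul_const u)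
    rw [hzero s hs, zero_apply] at this
    exact this.hasDerivWithinAt
  exact constant_of_has_deriv_right_zero (hH.continuous.comp (continuous_id.smul
    continuous_const)).continuousOn hderiv B (right_mem_Icc.mpr hAB)

theorem norm_smul_sub_of_eq_norm_smul {u c : ℂ} (hu : ‖u‖ = 1) (hc : c = ‖c‖ • u) (s : ℝ) :
    ‖s • u - c‖ = |s - ‖c‖| := by
  conv_lhs => rw [hc, ← sub_smul, norm_smul, hu, mul_one, Real.norm_eq_abs]

theorem norm_add_smul_mem_sphere {u c : ℂ} {ρ : ℝ} (hu : ‖u‖ = 1) (hc : c = ‖c‖ • u) (hρ : 0 ≤ ρ) :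
    (‖c‖ + ρ) • u ∈ sphere c ρ := by
  rw [mem_sphere_iff_norm, norm_smul_sub_of_eq_norm_smul hu hc, add_sub_cancel_left,
    abs_of_nonneg hρ]

theorem smul_mem_sphere_of_forall_Ioo_notMem_closedBall {u c : ℂ} {ρ A B : ℝ} (hAB : A < B)
    (hB : B • u ∈ closedBall c ρ) (hbefore : ∀ s ∈ Ioo A B, s • u ∉ closedBall c ρ) :
    B • u ∈ sphere c ρ := by
  have hIoo : Ioo A B ⊆ {s : ℝ | ρ ≤ ‖s • u - c‖} := fun s hs =>
    (not_le.mp (hbefore s hs ∘ mem_closedBall_iff_norm.mpr)).le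
  have hclosed : IsClosed {s : ℝ | ρ ≤ ‖s • u - c‖} := isClosed_le continuous_const (by fun_prop)
  have hge := hclosed.closure_subset_iff.mpr hIoo
    ((closure_Ioo hAB.ne).symm ▸ right_mem_Icc.mpr hAB.le)
  exact mem_sphere_iff_norm.mpr (le_antisymm (mem_closedBall_iff_norm.mp hB) hge)

section CircularDomain

variable {m : ℕ} (a : Fin m → ℂ) (r : Fin m → ℝ)

def circularDomain : Set ℂ := ball 0 1 \ ⋃ j, closedBall (a j) (r j)

def closedCircularDomain : Set ℂ := closedBall 0 1 \ ⋃ j, ball (a j) (r j)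

def circularBoundary : Set ℂ := sphere 0 1 ∪ ⋃ j, sphere (a j) (r j)

variable {a r}

theorem isOpen_circularDomain : IsOpen (circularDomain a r) :=
  isOpen_ball.sdiff (isClosed_iUnion_of_finite fun _ => isClosed_closedBall)

theorem isBounded_circularDomain : IsBounded (circularDomain a r) :=
  isBounded_ball.subset sdiff_subset

theorem circularDomain_subset_closedCircularDomain :
    circularDomain a r ⊆ closedCircularDomain a r :=
  sdiff_subset_sdiff ball_subset_closedBall (iUnion_mono fun _ => ball_subset_closedBall)

theorem isClosed_closedCircularDomain : IsClosed (closedCircularDomain a r) :=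
  isClosed_closedBall.sdiff (isOpen_iUnion fun _ => isOpen_ball)

theorem closedCircularDomain_subset_union :
    closedCircularDomain a r ⊆ circularDomain a r ∪ circularBoundary a r := by
  rintro z ⟨hz1, hzholes⟩
  simp only [mem_iUnion, not_exists, mem_ball, not_lt] at hzholes
  by_cases hzD : z ∈ circularDomain a r
  · exact Or.inl hzD
  refine Or.inr ?_
  rcases (mem_closedBall.mp hz1).eq_or_lt with hz | hz
  · exact Or.inl hz
  · have hz_hole : z ∈ ⋃ j, closedBall (a j) (r j) := by
      by_contra h
      exact hzD ⟨mem_ball.mpr hz, h⟩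
    obtain ⟨j, hj⟩ := mem_iUnion.mp hz_hole
    exact Or.inr (mem_iUnion.mpr ⟨j, le_antisymm hj (hzholes j)⟩)

theorem frontier_circularDomain_subset : frontier (circularDomain a r) ⊆ circularBoundary a r := by
  rw [isOpen_circularDomain.frontier_eq]
  rintro z ⟨hzcl, hzD⟩
  have hz := isClosed_closedCircularDomain.closure_subset_iff.mpr
    circularDomain_subset_closedCircularDomain hzcl
  exact (closedCircularDomain_subset_union hz).resolve_left hzD

theorem notMem_closedBall_of_mem_sphere (hdisj : ∀ j t, j ≠ t → r j + r t < ‖a j - a t‖)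
    {j t : Fin m} (hjt : j ≠ t) {z : ℂ} (hz : z ∈ sphere (a j) (r j)) :
    z ∉ closedBall (a t) (r t) := fun hzt => (hdisj j t hjt).not_ge <|
  calc ‖a j - a t‖ ≤ ‖a j - z‖ + ‖z - a t‖ := norm_sub_le_norm_sub_add_norm_sub _ _ _
    _ ≤ r j + r t := by
      rw [norm_sub_rev, mem_sphere_iff_norm.mp hz]
      linarith [mem_closedBall_iff_norm.mp hzt]

theorem smul_mem_closedCircularDomain (hr : ∀ j, 0 ≤ r j) {j : Fin m} {u : ℂ} (hu : ‖u‖ = 1)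
    (hau : a j = ‖a j‖ • u) {s : ℝ} (hs : s ∈ Icc (‖a j‖ + r j) 1)
    (hother : ∀ t ≠ j, s • u ∉ closedBall (a t) (r t)) : s • u ∈ closedCircularDomain a r := by
  have hs_nonneg : 0 ≤ s := (add_nonneg (norm_nonneg _) (hr j)).trans hs.1
  refine ⟨?_, ?_⟩
  · rw [mem_closedBall_zero_iff, norm_smul, hu, mul_one, Real.norm_eq_abs, abs_of_nonneg hs_nonneg]
    exact hs.2
  · simp only [mem_iUnion, not_exists]
    intro t hst
    rcases eq_or_ne t j with rfl | htj
    · rw [mem_ball, dist_eq_norm, norm_smul_sub_of_eq_norm_smul hu hau] at hst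
      exact hst.not_ge (by rw [abs_of_nonneg (by linarith [hs.1, hr t])]; linarith [hs.1])
    · exact hother t htj (ball_subset_closedBall hst)

theorem exists_escape_along_ray (hr : ∀ j, 0 ≤ r j) (hin : ∀ j, ‖a j‖ + r j < 1)
    (hdisj : ∀ j t, j ≠ t → r j + r t < ‖a j - a t‖) {j : Fin m} {u : ℂ} (hu : ‖u‖ = 1)
    (hau : a j = ‖a j‖ • u) :
    ∃ s₀ ∈ Ioc (‖a j‖ + r j) 1,
      (∀ s ∈ Ico (‖a j‖ + r j) s₀, s • u ∈ closedCircularDomain a r) ∧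
      (s₀ • u ∈ sphere 0 1 ∨ ∃ t, ‖a j‖ + r j < ‖a t‖ + r t ∧ s₀ • u ∈ sphere (a t) (r t)) := by
  set R := ‖a j‖ + r j
  have hR : 0 ≤ R := add_nonneg (norm_nonneg _) (hr j)
  set K : Set ℝ := Icc R 1 ∩ ⋃ t ∈ ({j}ᶜ : Set (Fin m)), (· • u) ⁻¹' closedBall (a t) (r t)
  have hK_closed : IsClosed K := isClosed_Icc.inter <|
    (toFinite _).isClosed_biUnion fun _ _ => isClosed_closedBall.preimage (by fun_prop)
  have hK_bdd : BddBelow K := ⟨R, fun _ hs => hs.1.1⟩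
  have hnot_mem_K : ∀ s ∈ Icc R 1, s ∉ K → ∀ t ≠ j, s • u ∉ closedBall (a t) (r t) :=
    fun s hs hsK t ht hst => hsK ⟨hs, mem_biUnion (mem_compl_singleton_iff.mpr ht) hst⟩
  have hmem : ∀ s ∈ Icc R 1, s ∉ K → s • u ∈ closedCircularDomain a r := fun s hs hsK =>
    smul_mem_closedCircularDomain hr hu hau hs (hnot_mem_K s hs hsK)
  rcases K.eq_empty_or_nonempty with hK | hK
  · refine ⟨1, ⟨hin j, le_rfl⟩, fun s hs => hmem s ⟨hs.1, hs.2.le⟩ (hK ▸ notMem_empty s),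
      Or.inl (by simp [hu])⟩
  -- `s₀` is where the ray first meets another closed hole; it is not the starting point,
  -- which lies on `Γ_j`, because distinct closed holes are disjoint.
  obtain ⟨⟨hs₀R, hs₀1⟩, hs₀t⟩ := hK_closed.csInf_mem hK hK_bdd
  set s₀ := sInf K
  simp only [mem_iUnion, mem_compl_singleton_iff, mem_preimage, exists_prop] at hs₀t
  obtain ⟨t, htj, hs₀t⟩ := hs₀t
  have hlt_not_mem_K : ∀ s < s₀, s ∉ K := fun s hs hsK => (csInf_le hK_bdd hsK).not_gt hs
  have hRs₀ : R < s₀ := hs₀R.lt_of_ne fun hRs₀ => notMem_closedBall_of_mem_sphere hdisj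
    htj.symm (hRs₀ ▸ norm_add_smul_mem_sphere hu hau (hr j)) hs₀t
  have hs₀_sphere : s₀ • u ∈ sphere (a t) (r t) :=
    smul_mem_sphere_of_forall_Ioo_notMem_closedBall hRs₀ hs₀t fun s hs =>
      hnot_mem_K s ⟨hs.1.le, hs.2.le.trans hs₀1⟩ (hlt_not_mem_K s hs.2) t htj
  refine ⟨s₀, ⟨hRs₀, hs₀1⟩, fun s hs => hmem s ⟨hs.1, hs.2.le.trans hs₀1⟩ (hlt_not_mem_K s hs.2),
    Or.inr ⟨t, ?_, hs₀_sphere⟩⟩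
  calc R < s₀ := hRs₀
    _ = ‖s₀ • u‖ := by rw [norm_smul, hu, mul_one, Real.norm_eq_abs, abs_of_nonneg (hR.trans hs₀R)]
    _ ≤ ‖a t‖ + ‖s₀ • u - a t‖ := norm_le_insert' _ _
    _ = ‖a t‖ + r t := by rw [mem_sphere_iff_norm.mp hs₀_sphere]

theorem eq_zero_or_exists_farther_of_fderiv_eq_zero (hr : ∀ j, 0 ≤ r j)
    (hin : ∀ j, ‖a j‖ + r j < 1) (hdisj : ∀ j t, j ≠ t → r j + r t < ‖a j - a t‖)
    {H : ℂ → ℝ} (hH : Differentiable ℝ H)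
    (hgrad : ∀ z ∈ closedCircularDomain a r, fderiv ℝ H z = 0) {lam : Fin m → ℝ}
    (hsph : ∀ j, ∀ z ∈ sphere (a j) (r j), H z = lam j) (hout : ∀ z ∈ sphere (0 : ℂ) 1, H z = 0)
    (j : Fin m) : lam j = 0 ∨ ∃ t, ‖a j‖ + r j < ‖a t‖ + r t ∧ lam t = lam j := by
  set u := exp (arg (a j) * I)
  have hu : ‖u‖ = 1 := norm_exp_ofReal_mul_I _
  have hau : a j = ‖a j‖ • u := by rw [real_smul, norm_mul_exp_arg_mul_I]
  obtain ⟨s₀, hs₀, hseg, hend⟩ := exists_escape_along_ray hr hin hdisj hu hau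
  have hH_s₀ : H (s₀ • u) = lam j := by
    rw [eq_of_fderiv_eq_zero_on_ray hH hs₀.1.le fun s hs => hgrad _ (hseg s hs),
      hsph j _ (norm_add_smul_mem_sphere hu hau (hr j))]
  rcases hend with hend | ⟨t, hRt, ht⟩
  · exact Or.inl (hH_s₀.symm.trans (hout _ hend))
  · exact Or.inr ⟨t, hRt, (hsph t _ ht).symm.trans hH_s₀⟩

theorem eq_zero_of_fderiv_eq_zero_on_closedCircularDomain (hr : ∀ j, 0 ≤ r j)
    (hin : ∀ j, ‖a j‖ + r j < 1) (hdisj : ∀ j t, j ≠ t → r j + r t < ‖a j - a t‖)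
    {H : ℂ → ℝ} (hH : Differentiable ℝ H)
    (hgrad : ∀ z ∈ closedCircularDomain a r, fderiv ℝ H z = 0) {lam : Fin m → ℝ}
    (hsph : ∀ j, ∀ z ∈ sphere (a j) (r j), H z = lam j) (hout : ∀ z ∈ sphere (0 : ℂ) 1, H z = 0)
    (j : Fin m) : lam j = 0 := by
  by_contra hj
  obtain ⟨k, hk, hk_max⟩ := (Finset.univ.filter fun t => lam t ≠ 0).exists_max_image
    (fun t => ‖a t‖ + r t) ⟨j, by simpa using hj⟩
  rw [Finset.mem_filter] at hk
  rcases eq_zero_or_exists_farther_of_fderiv_eq_zero hr hin hdisj hH hgrad hsph hout k with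
    hk0 | ⟨t, hRt, ht⟩
  · exact hk.2 hk0
  · exact (hk_max t (by simpa [ht] using hk.2)).not_gt hRt

end CircularDomain

theorem stmt5_general (m : ℕ) (a : Fin m → ℂ) (r : Fin m → ℝ)
    (hr : ∀ j, 0 < r j) (hin : ∀ j, ‖a j‖ + r j < 1)
    (hdisj : ∀ j t, j ≠ t → r j + r t < ‖a j - a t‖)
    (D : Set ℂ) (hD : D = Metric.ball 0 1 \ ⋃ j, Metric.closedBall (a j) (r j))
    (h : Fin m → ℂ → ℝ)
    (hC1 : ∀ p, ContDiff ℝ 1 (h p))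
    (hharm : ∀ p, IsHarmonicOn (h p) D)
    (hbd1 : ∀ p, ∀ z ∈ Metric.sphere (a p) (r p), h p z = 1)
    (hbd0 : ∀ p j, p ≠ j → ∀ z ∈ Metric.sphere (a j) (r j), h p z = 0)
    (hbdout : ∀ p, ∀ z ∈ Metric.sphere (0 : ℂ) 1, h p z = 0)
    (lam : Fin m → ℝ)
    (hnormal_out : ∀ z ∈ Metric.sphere (0 : ℂ) 1,
      fderiv ℝ (fun w => ∑ p, lam p * h p w) z z = 0)
    (hnormal_in : ∀ j, ∀ z ∈ Metric.sphere (a j) (r j),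
      fderiv ℝ (fun w => ∑ p, lam p * h p w) z (z - a j) = 0) :
    ∀ p, lam p = 0 := by
  subst hD
  set H : ℂ → ℝ := fun w => ∑ p, lam p * h p w
  have hH : ContDiff ℝ 1 H := ContDiff.sum fun p _ => contDiff_const.mul (hC1 p)
  have hHd : Differentiable ℝ H := hH.differentiable one_ne_zero
  have hH_harm : HarmonicOnNhd H (circularDomain a r) := HarmonicOnNhd.fun_sum _ fun p _ =>
    ((hharm p).harmonicOnNhd isOpen_circularDomain).const_smul (c := lam p)
  have hsph : ∀ j, ∀ z ∈ sphere (a j) (r j), H z = lam j := fun j z hz => by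
    show ∑ p, lam p * h p z = lam j
    rw [Finset.sum_eq_single j (fun p _ hp => by rw [hbd0 p j hp z hz, mul_zero]) (by simp),
      hbd1 j z hz, mul_one]
  have hout : ∀ z ∈ sphere (0 : ℂ) 1, H z = 0 := fun z hz =>
    Finset.sum_eq_zero fun p _ => by rw [hbdout p z hz, mul_zero]
  have hgrad_boundary : ∀ z ∈ circularBoundary a r, fderiv ℝ H z = 0 := by
    rintro z (hz | hz)
    · exact fderiv_eq_zero_of_eqOn_sphere one_ne_zero (hHd z) hout hz
        (by simpa using hnormal_out z hz)
    · obtain ⟨j, hz⟩ := mem_iUnion.mp hz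
      exact fderiv_eq_zero_of_eqOn_sphere (hr j).ne' (hHd z) (hsph j)
        hz (hnormal_in j z hz)
  have hgrad : ∀ z ∈ closedCircularDomain a r, fderiv ℝ H z = 0 := fun z hz =>
    (closedCircularDomain_subset_union hz).elim
      (fun hzD => hH_harm.fderiv_eq_zero_on_closure isBounded_circularDomain
        (hH.continuous_fderiv one_ne_zero).continuousOn
        (fun w hw => hgrad_boundary w (frontier_circularDomain_subset hw)) z (subset_closure hzD))
      (hgrad_boundary z)
  exact eq_zero_of_fderiv_eq_zero_on_closedCircularDomain (fun j => (hr j).le) hin hdisj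
    hHd hgrad hsph hout

/-- If the harmonic measures `h p` of the inner boundary circles of the circular domain
`D = Δ \ ⋃ closedBall (a j) (r j)` (harmonic on `D`, `C¹` up to the boundary, equal to
`δ_{pj}` on the boundary circles and `0` on the outer circle) combine to a harmonic
function `h = Σ λ_p h_p` whose normal derivative vanishes on all of `∂D`, then all
`λ_p = 0`. -/
theorem stmt5 (m : ℕ) (a : Fin m → ℂ) (r : Fin m → ℝ)
    (hr : ∀ j, 0 < r j) (hin : ∀ j, ‖a j‖ + r j < 1)
    (hdisj : ∀ j t, j ≠ t → r j + r t < ‖a j - a t‖)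
    (D : Set ℂ) (hD : D = Metric.ball 0 1 \ ⋃ j, Metric.closedBall (a j) (r j))
    (h : Fin m → ℂ → ℝ)
    (hC1 : ∀ p, ContDiff ℝ 1 (h p))
    (hcont : ∀ p, ContinuousOn (h p) (closure D))
    (hharm : ∀ p, IsHarmonicOn (h p) D)
    (hbd1 : ∀ p, ∀ z ∈ Metric.sphere (a p) (r p), h p z = 1)
    (hbd0 : ∀ p j, p ≠ j → ∀ z ∈ Metric.sphere (a j) (r j), h p z = 0)
    (hbdout : ∀ p, ∀ z ∈ Metric.sphere (0 : ℂ) 1, h p z = 0)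
    (lam : Fin m → ℝ)
    (hnormal_out : ∀ z ∈ Metric.sphere (0 : ℂ) 1,
      fderiv ℝ (fun w => ∑ p, lam p * h p w) z z = 0)
    (hnormal_in : ∀ j, ∀ z ∈ Metric.sphere (a j) (r j),
      fderiv ℝ (fun w => ∑ p, lam p * h p w) z (z - a j) = 0) :
    ∀ p, lam p = 0 :=
  stmt5_general m a r hr hin hdisj D hD h hC1 hharm hbd1 hbd0 hbdout lam hnormal_out hnormal_in
end

section
/- Let γ ⊂ ℂ be a Jordan curve and a, b two distinct points of ℂ \ γ lying in different connected components of ℂ \ γ, with a in the bounded component. If f : closure(𝔻) → ℂ is continuous, holomorphic on 𝔻, and f(z) ∈ γ for all z ∈ ∂𝔻, and if f attains the value a in 𝔻, then the winding number of f|_{∂𝔻} around a is positive (≥ 1). -/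
open Complex Metric Set Function Topology
open scoped Real

/-!
Put `g = f - a`. For `s < 1` close to `1`, the loop `θ ↦ g (s e^{iθ})` stays closer to
`θ ↦ g (e^{iθ})` than the latter is to `0`, so the quotient of the two loops never leaves the right
half-plane and continuous logarithms of the two loops have the same increment over `[0, 2π]`. On
the circle of radius `s` the function `g` is holomorphic, so that increment is `∮ g'/g`, which by
the argument principle is `2πi` times the number of zeros of `g` inside, counted with multiplicity:
a positive number, since `g` vanishes where `f` attains `a`.
-/

theorem sub_eq_sub_of_cexp_eq {X : Type*} [TopologicalSpace X] [PreconnectedSpace X] {F G : X → ℂ}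
    (hF : Continuous F) (hG : Continuous G) (h : ∀ x, exp (F x) = exp (G x)) (x y : X) :
    F x - G x = F y - G y :=
  isCoveringMap_exp.const_of_comp (hF.sub hG)
    (fun x y ↦ Subtype.ext (by simp only [Pi.sub_apply, exp_sub, h, div_self (exp_ne_zero _)])) x y

theorem cexp_lift_sub_eq_of_norm_sub_lt {F G u v : ℝ → ℂ} (hF : Continuous F) (hG : Continuous G)
    (hFu : ∀ t, exp (F t) = u t) (hGv : ∀ t, exp (G t) = v t)
    (huv : ∀ t, ‖v t - u t‖ < ‖u t‖) {a b : ℝ} (hab : v b / u b = v a / u a) :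
    G b - G a = F b - F a := by
  have hu : ∀ t, u t ≠ 0 := fun t ↦ hFu t ▸ exp_ne_zero _
  -- `v / u` stays in `ball 1 1`, so a continuous branch of `log` follows it
  have hq : ∀ t, v t / u t ∈ slitPlane := fun t ↦ ball_one_subset_slitPlane <| by
    rw [mem_ball, dist_eq, div_sub_one (hu t), norm_div, div_lt_one (norm_pos_iff.2 (hu t))]
    exact huv t
  have hL : Continuous fun t ↦ F t + log (v t / u t) := by
    have hu' : Continuous u := by simpa only [← funext hFu] using hF.cexp
    have hv' : Continuous v := by simpa only [← funext hGv] using hG.cexp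
    exact hF.add ((hv'.div hu' hu).clog hq)
  have hLv : ∀ t, exp (F t + log (v t / u t)) = exp (G t) := fun t ↦ by
    rw [exp_add, exp_log (slitPlane_ne_zero (hq t)), hFu, hGv, mul_div_cancel₀ _ (hu t)]
  have := sub_eq_sub_of_cexp_eq hL hG hLv b a
  rw [hab] at this
  linear_combination -this

theorem exists_cexp_lift_of_hasDerivAt {p p' : ℝ → ℂ} (hp : ∀ t, HasDerivAt p (p' t) t)
    (hp' : Continuous p') (hne : ∀ t, p t ≠ 0) :
    ∃ F : ℝ → ℂ, Continuous F ∧ (∀ t, exp (F t) = p t) ∧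
      ∀ t, F t - F 0 = ∫ s in (0 : ℝ)..t, p' s / p s := by
  have hψ : Continuous fun t ↦ p' t / p t :=
    hp'.div (continuous_iff_continuousAt.2 fun t ↦ (hp t).continuousAt) hne
  set F : ℝ → ℂ := fun t ↦ log (p 0) + ∫ s in (0 : ℝ)..t, p' s / p s
  have hF0 : F 0 = log (p 0) := by simp [F]
  have hF : ∀ t, HasDerivAt F (p' t / p t) t := fun t ↦
    (hψ.integral_hasStrictDerivAt 0 t).hasDerivAt.const_add _
  have hE : ∀ t, HasDerivAt (fun t ↦ exp (-F t) * p t) 0 t := fun t ↦ by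
    refine ((hF t).neg.cexp.mul (hp t)).congr_deriv ?_
    field_simp [hne t]
    ring
  refine ⟨F, continuous_iff_continuousAt.2 fun t ↦ (hF t).continuousAt, fun t ↦ ?_, fun t ↦ ?_⟩
  · have h := is_const_of_deriv_eq_zero (fun t ↦ (hE t).differentiableAt)
      (fun t ↦ (hE t).deriv) t 0
    rw [hF0, exp_neg, exp_neg, exp_log (hne 0), inv_mul_cancel₀ (hne 0),
      inv_mul_eq_one₀ (exp_ne_zero _)] at h
    exact h
  · simp [F]

theorem exists_cexp_lift_circleMap {g : ℂ → ℂ} {c : ℂ} {R : ℝ}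
    (hg : AnalyticOnNhd ℂ g (sphere c |R|)) (hne : ∀ z ∈ sphere c |R|, g z ≠ 0) :
    ∃ F : ℝ → ℂ, Continuous F ∧ (∀ θ, exp (F θ) = g (circleMap c R θ)) ∧
      F (2 * π) - F 0 = ∮ z in C(c, R), logDeriv g z := by
  have hmem := circleMap_mem_sphere' c R
  have hp : ∀ θ, HasDerivAt (fun θ ↦ g (circleMap c R θ))
      (deriv (circleMap c R) θ * deriv g (circleMap c R θ)) θ := fun θ ↦ by
    rw [mul_comm, deriv_circleMap]
    exact (hg _ (hmem θ)).differentiableAt.hasDerivAt.comp θ (hasDerivAt_circleMap c R θ)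
  have hp' : Continuous fun θ ↦ deriv (circleMap c R) θ * deriv g (circleMap c R θ) := by
    simp only [deriv_circleMap]
    exact ((continuous_circleMap 0 R).mul continuous_const).mul
      (hg.deriv.continuousOn.comp_continuous (continuous_circleMap c R) hmem)
  obtain ⟨F, hFc, hFexp, hFint⟩ :=
    exists_cexp_lift_of_hasDerivAt hp hp' fun θ ↦ hne _ (hmem θ)
  refine ⟨F, hFc, hFexp, ?_⟩
  rw [hFint, circleIntegral]
  simp only [logDeriv_apply, smul_eq_mul, mul_div_assoc]

theorem AnalyticOnNhd.dslope {𝕜 E : Type*} [NontriviallyNormedField 𝕜] [NormedAddCommGroup E]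
    [NormedSpace 𝕜 E] {f : 𝕜 → E} {U : Set 𝕜} {a : 𝕜} (hf : AnalyticOnNhd 𝕜 f U) (ha : a ∈ U) :
    AnalyticOnNhd 𝕜 (dslope f a) U := fun z hz ↦ by
  rcases eq_or_ne z a with rfl | hza
  · obtain ⟨p, hp⟩ := hf z hz
    exact hp.has_fpower_series_dslope_fslope.analyticAt
  · rw [analyticAt_congr (dslope_eventuallyEq_slope_of_ne f hza), slope_fun_def]
    exact ((analyticAt_id.sub analyticAt_const).inv (sub_ne_zero.2 hza)).smul
      ((hf z hz).sub analyticAt_const)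

theorem AnalyticOnNhd.exists_eq_sub_pow_mul {g : ℂ → ℂ} {U : Set ℂ} {z₀ : ℂ}
    (hg : AnalyticOnNhd ℂ g U) (hz₀ : z₀ ∈ U) (hg₀ : g z₀ = 0) (hev : ¬∀ᶠ z in 𝓝 z₀, g z = 0) :
    ∃ k > 0, ∃ h : ℂ → ℂ, AnalyticOnNhd ℂ h U ∧ h z₀ ≠ 0 ∧ g = fun z ↦ (z - z₀) ^ k * h z := by
  obtain ⟨p, hp⟩ := hg z₀ hz₀
  have hp0 : p ≠ 0 := fun h ↦ hev (hp.locally_zero_iff.2 h)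
  have hh : ∀ n, AnalyticOnNhd ℂ ((swap _root_.dslope z₀)^[n] g) U := fun n ↦ by
    induction n with
    | zero => exact hg
    | succ n ih => rw [iterate_succ_apply']; exact ih.dslope hz₀
  set h := (swap _root_.dslope z₀)^[p.order] g
  have hfac : g = fun z ↦ (z - z₀) ^ p.order * h z := funext hp.eq_pow_order_mul_iterate_dslope
  have hh₀ : h z₀ ≠ 0 := hp.iterate_dslope_fslope_ne_zero hp0
  refine ⟨p.order, Nat.pos_of_ne_zero fun hk ↦ hh₀ ?_, h, hh _, hh₀, hfac⟩
  simpa [hk, hg₀] using (congrFun hfac z₀).symm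

theorem AnalyticOnNhd.finite_setOf_eq_zero {𝕜 E : Type*} [NontriviallyNormedField 𝕜]
    [NormedAddCommGroup E] [NormedSpace 𝕜 E] {f : 𝕜 → E} {K : Set 𝕜} {x : 𝕜}
    (hf : AnalyticOnNhd 𝕜 f K) (hK : IsCompact K) (hKc : IsConnected K) (hx : x ∈ K)
    (hfx : f x ≠ 0) : {z ∈ K | f z = 0}.Finite := by
  convert hK.finite_sdiff_of_mem_codiscreteWithin
    (hf.preimage_zero_mem_codiscreteWithin hfx hx hKc) using 1
  ext
  simp

section ArgumentPrinciple

variable {g h : ℂ → ℂ} {c z₀ : ℂ} {R : ℝ}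

theorem circleIntegral_logDeriv_eq_zero (hR : 0 ≤ R) (hg : AnalyticOnNhd ℂ g (closedBall c R))
    (hne : ∀ z ∈ closedBall c R, g z ≠ 0) : ∮ z in C(c, R), logDeriv g z = 0 :=
  circleIntegral_eq_zero_of_differentiable_on_off_countable hR countable_empty
    (hg.deriv.continuousOn.div hg.continuousOn hne) fun z hz ↦
      have hz' := ball_subset_closedBall hz.1
      (hg.deriv z hz').differentiableAt.div (hg z hz').differentiableAt (hne z hz')

theorem circleIntegral_logDeriv_sub_pow_mul (hz₀ : z₀ ∈ ball c R)
    (hh : AnalyticOnNhd ℂ h (sphere c R)) (hne : ∀ z ∈ sphere c R, h z ≠ 0) (k : ℕ) :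
    ∮ z in C(c, R), logDeriv (fun z ↦ (z - z₀) ^ k * h z) z =
      2 * π * I * k + ∮ z in C(c, R), logDeriv h z := by
  have hR : 0 ≤ R := (pos_of_mem_ball hz₀).le
  have hsub : ∀ z ∈ sphere c R, z - z₀ ≠ 0 := fun z hz ↦
    sub_ne_zero.2 <| by rintro rfl; exact (mem_ball.1 hz₀).ne (mem_sphere.1 hz)
  have hpt : EqOn (fun z ↦ logDeriv (fun z ↦ (z - z₀) ^ k * h z) z)
      (fun z ↦ k * (z - z₀)⁻¹ + logDeriv h z) (sphere c R) := fun z hz ↦ by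
    have hd : DifferentiableAt ℂ (· - z₀) z := differentiableAt_id.sub_const z₀
    dsimp only
    rw [logDeriv_mul (f := fun z ↦ (z - z₀) ^ k) z (pow_ne_zero k (hsub z hz)) (hne z hz) (hd.pow k)
      (hh z hz).differentiableAt, logDeriv_fun_pow hd, logDeriv_apply, deriv_sub_const,
      deriv_id'', one_div]
  have hint₁ : CircleIntegrable (fun z ↦ k * (z - z₀)⁻¹) c R :=
    (continuousOn_const.mul ((continuousOn_id.sub continuousOn_const).inv₀ hsub)).circleIntegrable
      hR
  have hint₂ : CircleIntegrable (logDeriv h) c R :=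
    (hh.deriv.continuousOn.div hh.continuousOn hne).circleIntegrable hR
  rw [circleIntegral.integral_congr hR hpt, circleIntegral.integral_add hint₁ hint₂,
    circleIntegral.integral_const_mul, circleIntegral.integral_sub_inv_of_mem_ball hz₀, mul_comm]

theorem exists_circleIntegral_logDeriv_eq_add_of_apply_eq_zero
    (hg : AnalyticOnNhd ℂ g (closedBall c R)) (hne : ∀ z ∈ sphere c R, g z ≠ 0)
    (hz₀ : z₀ ∈ closedBall c R) (hgz₀ : g z₀ = 0) :
    ∃ k : ℕ, 0 < k ∧ ∃ h : ℂ → ℂ, AnalyticOnNhd ℂ h (closedBall c R) ∧ (∀ z ∈ sphere c R, h z ≠ 0) ∧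
      {z ∈ closedBall c R | h z = 0} ⊆ {z ∈ closedBall c R | g z = 0} \ {z₀} ∧
      ∮ z in C(c, R), logDeriv g z = 2 * π * I * k + ∮ z in C(c, R), logDeriv h z := by
  have hz₀' : z₀ ∈ ball c R := mem_ball.2 <| (mem_closedBall.1 hz₀).lt_of_ne fun h ↦
    hne z₀ (mem_sphere.2 h) hgz₀
  obtain ⟨w, hw⟩ := (NormedSpace.sphere_nonempty (x := c)).2 (pos_of_mem_ball hz₀').le
  have hev : ¬∀ᶠ z in 𝓝 z₀, g z = 0 := fun hev ↦ hne w hw <|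
    hg.eqOn_zero_of_preconnected_of_eventuallyEq_zero isPreconnected_closedBall hz₀ hev
      (sphere_subset_closedBall hw)
  obtain ⟨k, hk, h, hh, hh₀, rfl⟩ := hg.exists_eq_sub_pow_mul hz₀ hgz₀ hev
  have hhne : ∀ z ∈ sphere c R, h z ≠ 0 := fun z hz ↦ right_ne_zero_of_mul (hne z hz)
  refine ⟨k, hk, h, hh, hhne, fun z ⟨hz, hhz⟩ ↦ ⟨⟨hz, by simp [hhz]⟩, fun hzz ↦ hh₀ (hzz ▸ hhz)⟩,
    circleIntegral_logDeriv_sub_pow_mul hz₀' (hh.mono sphere_subset_closedBall) hhne k⟩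

theorem exists_circleIntegral_logDeriv_eq_natCast_of_encard_le (hR : 0 ≤ R) (n : ℕ)
    (hg : AnalyticOnNhd ℂ g (closedBall c R)) (hne : ∀ z ∈ sphere c R, g z ≠ 0)
    (hn : {z ∈ closedBall c R | g z = 0}.encard ≤ n) :
    ∃ m : ℕ, ∮ z in C(c, R), logDeriv g z = 2 * π * I * m ∧
      ∀ z ∈ ball c R, g z = 0 → 0 < m := by
  induction n generalizing g with
  | zero =>
    have hZ : {z ∈ closedBall c R | g z = 0} = ∅ :=
      encard_eq_zero.1 (nonpos_iff_eq_zero.1 (mod_cast hn))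
    have hg₀ : ∀ z ∈ closedBall c R, g z ≠ 0 := fun z hz hgz ↦ hZ.subset ⟨hz, hgz⟩
    exact ⟨0, by simp [circleIntegral_logDeriv_eq_zero hR hg hg₀],
      fun z hz hgz ↦ (hg₀ z (ball_subset_closedBall hz) hgz).elim⟩
  | succ n ih =>
    rcases eq_empty_or_nonempty {z ∈ closedBall c R | g z = 0} with hZ | ⟨z₀, hz₀, hgz₀⟩
    · exact ih hg hne (by rw [hZ, encard_empty]; exact zero_le)
    obtain ⟨k, hk, h, hh, hhne, hZh, hint⟩ :=
      exists_circleIntegral_logDeriv_eq_add_of_apply_eq_zero hg hne hz₀ hgz₀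
    have hn' : {z ∈ closedBall c R | h z = 0}.encard ≤ n := by
      rw [← ENat.add_le_add_iff_right ENat.one_ne_top]
      calc _ ≤ _ := add_le_add_left (encard_le_encard hZh) 1
        _ = _ := encard_sdiff_singleton_add_one (show z₀ ∈ {z ∈ closedBall c R | _} from
          ⟨hz₀, hgz₀⟩)
        _ ≤ _ := mod_cast hn
    obtain ⟨m, hm, -⟩ := ih hh hhne hn'
    refine ⟨k + m, ?_, fun _ _ _ ↦ by omega⟩
    rw [hint, hm]
    push_cast
    ring

theorem exists_circleIntegral_logDeriv_eq_natCast (hR : 0 < R)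
    (hg : AnalyticOnNhd ℂ g (closedBall c R)) (hne : ∀ z ∈ sphere c R, g z ≠ 0) :
    ∃ m : ℕ, ∮ z in C(c, R), logDeriv g z = 2 * π * I * m ∧
      ∀ z ∈ ball c R, g z = 0 → 0 < m := by
  obtain ⟨w, hw⟩ := (NormedSpace.sphere_nonempty (x := c)).2 hR.le
  have hfin := hg.finite_setOf_eq_zero (isCompact_closedBall c R) (isConnected_closedBall hR.le)
    (sphere_subset_closedBall hw) (hne w hw)
  exact exists_circleIntegral_logDeriv_eq_natCast_of_encard_le hR.le _ hg hne
    hfin.cast_ncard_eq.ge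

end ArgumentPrinciple

theorem exists_radius_norm_sub_lt_norm {g : ℂ → ℂ} (hg : ContinuousOn g (closedBall 0 1))
    (hne : ∀ z ∈ sphere (0 : ℂ) 1, g z ≠ 0) {r : ℝ} (hr₀ : 0 ≤ r) (hr₁ : r < 1) :
    ∃ s, r < s ∧ s < 1 ∧ ∀ z ∈ sphere (0 : ℂ) 1, ‖g (s * z) - g z‖ < ‖g z‖ := by
  obtain ⟨w, hw, hmin⟩ := (isCompact_sphere (0 : ℂ) 1).exists_isMinOn
    ((NormedSpace.sphere_nonempty (x := (0 : ℂ))).2 zero_le_one)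
    (continuous_norm.comp_continuousOn (hg.mono sphere_subset_closedBall))
  obtain ⟨δ, hδ, hgδ⟩ := Metric.uniformContinuousOn_iff.1
    ((isCompact_closedBall 0 1).uniformContinuousOn_of_continuous hg) _
    (norm_pos_iff.2 (hne w hw))
  obtain ⟨s, hs, hs₁⟩ := exists_between (max_lt hr₁ (by linarith : 1 - δ < 1))
  obtain ⟨hrs, hsδ⟩ := max_lt_iff.1 hs
  have hs₀ : 0 ≤ s := by linarith
  refine ⟨s, hrs, hs₁, fun z hz ↦ ?_⟩
  have hz₁ : ‖z‖ = 1 := by simpa using hz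
  have hsz : ‖(s : ℂ) * z‖ = s := by rw [norm_mul, hz₁, mul_one, norm_real, Real.norm_of_nonneg hs₀]
  have hdist : dist ((s : ℂ) * z) z < δ := by
    rw [dist_eq_norm, ← sub_one_mul, norm_mul, hz₁, mul_one, ← ofReal_one, ← ofReal_sub, norm_real,
      Real.norm_of_nonpos (by linarith)]
    linarith
  calc ‖g (s * z) - g z‖ = dist (g (s * z)) (g z) := (dist_eq_norm _ _).symm
    _ < ‖g w‖ := hgδ _ (mem_closedBall_zero_iff.2 (by linarith)) z
        (sphere_subset_closedBall hz) hdist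
    _ ≤ ‖g z‖ := hmin hz

theorem exists_pos_cexp_lift_circleMap_sub_eq {g : ℂ → ℂ} (hgc : ContinuousOn g (closedBall 0 1))
    (hgd : DifferentiableOn ℂ g (ball 0 1)) (hne : ∀ z ∈ sphere (0 : ℂ) 1, g z ≠ 0) {z₀ : ℂ}
    (hz₀ : z₀ ∈ ball (0 : ℂ) 1) (hgz₀ : g z₀ = 0) {G : ℝ → ℂ} (hG : Continuous G)
    (hGexp : ∀ θ, exp (G θ) = g (circleMap 0 1 θ)) :
    ∃ m : ℕ, 0 < m ∧ G (2 * π) - G 0 = 2 * π * I * m := by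
  obtain ⟨s, hz₀s, hs₁, hclose⟩ :=
    exists_radius_norm_sub_lt_norm hgc hne (norm_nonneg z₀) (mem_ball_zero_iff.1 hz₀)
  have hs : 0 < s := (norm_nonneg z₀).trans_lt hz₀s
  have hg : AnalyticOnNhd ℂ g (closedBall 0 s) :=
    (hgd.analyticOnNhd isOpen_ball).mono (closedBall_subset_ball hs₁)
  have hgs : ∀ z ∈ sphere (0 : ℂ) s, g z ≠ 0 := fun z hz hgz ↦ by
    have := hclose (z / s) (by simp [mem_sphere_zero_iff_norm.1 hz, hs.ne', abs_of_pos hs])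
    rw [mul_div_cancel₀ _ (ofReal_ne_zero.2 hs.ne'), hgz, zero_sub, norm_neg] at this
    exact this.false
  obtain ⟨m, hm, hm₀⟩ := exists_circleIntegral_logDeriv_eq_natCast hs hg hgs
  obtain ⟨F, hFc, hFexp, hFint⟩ := exists_cexp_lift_circleMap (R := s)
    (by rw [abs_of_pos hs]; exact hg.mono sphere_subset_closedBall) (by rwa [abs_of_pos hs])
  have hperiod : g (circleMap 0 s (2 * π)) / g (circleMap 0 1 (2 * π)) =
      g (circleMap 0 s 0) / g (circleMap 0 1 0) := by
    rw [(periodic_circleMap 0 s).eq, (periodic_circleMap 0 1).eq]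
  have hwind := cexp_lift_sub_eq_of_norm_sub_lt hG hFc hGexp hFexp (fun θ ↦ by
    simpa only [circleMap_zero, ofReal_one, one_mul] using
      hclose _ (circleMap_mem_sphere 0 zero_le_one θ)) hperiod
  exact ⟨m, hm₀ z₀ (mem_ball_zero_iff.2 hz₀s) hgz₀, by rw [← hwind, hFint, hm]⟩

theorem stmt14_general (γ : Set ℂ)
    (a : ℂ) (ha : a ∉ γ)
    (f : ℂ → ℂ) (hfc : ContinuousOn f (Metric.closedBall 0 1))
    (hfh : DifferentiableOn ℂ f (Metric.ball 0 1))
    (hfγ : ∀ z ∈ Metric.sphere (0 : ℂ) 1, f z ∈ γ)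
    (hattain : ∃ z ∈ Metric.ball (0 : ℂ) 1, f z = a) :
    ∀ A ρ : ℝ → ℝ, Continuous A → Continuous ρ → (∀ θ, 0 < ρ θ) →
      (∀ θ : ℝ, f (Complex.exp (θ * Complex.I)) - a =
        (ρ θ : ℂ) * Complex.exp ((A θ : ℂ) * Complex.I)) →
      2 * Real.pi ≤ A (2 * Real.pi) - A 0 := by
  intro A ρ hA hρ hρ₀ hlift
  obtain ⟨z₀, hz₀, hfz₀⟩ := hattain
  set G : ℝ → ℂ := fun θ ↦ (Real.log (ρ θ) : ℂ) + (A θ : ℂ) * I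
  have hGc : Continuous G := by
    have := hρ.log fun θ ↦ (hρ₀ θ).ne'
    fun_prop
  have hGexp : ∀ θ, exp (G θ) = f (circleMap 0 1 θ) - a := fun θ ↦ by
    simp [G, exp_add, circleMap_zero, hlift, ← ofReal_exp, Real.exp_log (hρ₀ θ)]
  obtain ⟨m, hm, hGm⟩ := exists_pos_cexp_lift_circleMap_sub_eq (g := fun z ↦ f z - a)
    (hfc.sub continuousOn_const) (hfh.sub_const a) (fun z hz h ↦ ha (sub_eq_zero.1 h ▸ hfγ z hz))
    hz₀ (sub_eq_zero.2 hfz₀) hGc hGexp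
  have hincr : A (2 * π) - A 0 = 2 * π * m := by simpa [G] using congrArg Complex.im hGm
  have hm₁ : (1 : ℝ) ≤ m := mod_cast hm
  rw [hincr]
  nlinarith [Real.pi_pos]

/-- If `f` is continuous on the closed unit disc, holomorphic on the open disc, maps
`∂𝔻` into a Jordan curve `γ`, and attains in `𝔻` a value `a` lying in the bounded
component of `ℂ \ γ` (with some `b` in a different component), then the winding number
of `f|∂𝔻` around `a` is at least `1`: any continuous argument lift `A` of
`θ ↦ f(e^{iθ}) − a` increases by at least `2π` over `[0, 2π]`. -/
theorem stmt14 (γ : Set ℂ) (φ : ℂ → ℂ)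
    (hγ : γ = φ '' Metric.sphere (0 : ℂ) 1)
    (hφc : ContinuousOn φ (Metric.sphere (0 : ℂ) 1))
    (hφi : Set.InjOn φ (Metric.sphere (0 : ℂ) 1))
    (a b : ℂ) (ha : a ∉ γ) (hb : b ∉ γ) (hab : a ≠ b)
    (hcomp : connectedComponentIn γᶜ a ≠ connectedComponentIn γᶜ b)
    (habdd : Bornology.IsBounded (connectedComponentIn γᶜ a))
    (f : ℂ → ℂ) (hfc : ContinuousOn f (Metric.closedBall 0 1))
    (hfh : DifferentiableOn ℂ f (Metric.ball 0 1))
    (hfγ : ∀ z ∈ Metric.sphere (0 : ℂ) 1, f z ∈ γ)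
    (hattain : ∃ z ∈ Metric.ball (0 : ℂ) 1, f z = a) :
    ∀ A ρ : ℝ → ℝ, Continuous A → Continuous ρ → (∀ θ, 0 < ρ θ) →
      (∀ θ : ℝ, f (Complex.exp (θ * Complex.I)) - a =
        (ρ θ : ℂ) * Complex.exp ((A θ : ℂ) * Complex.I)) →
      2 * Real.pi ≤ A (2 * Real.pi) - A 0 :=
  stmt14_general γ a ha f hfc hfh hfγ hattain
end
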